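/- arXiv:1108.1124 — 7 statements merged into one kernel-verified Lean document; each statement's English description precedes it below -/
import Mathlib

section
/- Let (P, ≺) be a finite partially ordered set and let x, y be two distinct elements of P. In any sequence of permissible swaps starting from an ordering π, the relative order of x and y changes at most once; that is, no two elements can be swapped with each other more than once. -/
/-- An ordering of a finite poset `P`: a list of all elements of `P` without repetition. -/
def IsOrdering {P : Type*} (π : List P) : Prop := π.Nodup ∧ ∀ x : P, x ∈ π

/-- A permissible swap: exchange two adjacent elements `a b` with `a ≺ b`. -/
def PermissibleSwap {P : Type*} [PartialOrder P] (π σ : List P) : Prop :=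
  ∃ (l₁ l₂ : List P) (a b : P), a < b ∧ π = l₁ ++ a :: b :: l₂ ∧ σ = l₁ ++ b :: a :: l₂

/-- `σ` is reachable from `π` by a finite (possibly empty) sequence of permissible swaps. -/
def Reachable {P : Type*} [PartialOrder P] (π σ : List P) : Prop :=
  Relation.ReflTransGen PermissibleSwap π σ

/-- An ordering is terminal if no permissible swap applies to it. -/
def Terminal {P : Type*} [PartialOrder P] (π : List P) : Prop :=
  ∀ σ : List P, ¬ PermissibleSwap π σ

/-- `x` precedes `y` in the list `π` (occurs earlier). -/
def Precedes {P : Type*} [DecidableEq P] (π : List P) (x y : P) : Prop :=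
  π.idxOf x < π.idxOf y

/-- `x` and `y` are incomparable: neither `x ≺ y` nor `y ≺ x`. -/
def Incomp {P : Type*} [PartialOrder P] (x y : P) : Prop := ¬ x < y ∧ ¬ y < x

/-- `c` is an `(x,y)`-fence in `π`: a sequence starting at `x`, ending at `y`, whose
elements appear in this order (not necessarily consecutively) in `π`, with consecutive
elements incomparable. -/
def IsFence {P : Type*} [PartialOrder P] (π : List P) (x y : P) (c : List P) : Prop :=
  c.Chain' Incomp ∧ c.Sublist π ∧ c.head? = some x ∧ c.getLast? = some y

/-- There exists an `(x,y)`-fence in `π`. -/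
def HasFence {P : Type*} [PartialOrder P] (π : List P) (x y : P) : Prop :=
  ∃ c : List P, IsFence π x y c

/-- `(x,y)` is a critical pair in `π`: `x ≺ y`, `x` precedes `y` in `π`,
and there is no `(x,y)`-fence in `π`. -/
def Critical {P : Type*} [PartialOrder P] [DecidableEq P] (π : List P) (x y : P) : Prop :=
  x < y ∧ Precedes π x y ∧ ¬ HasFence π x y

/-! A permissible swap of adjacent `a ≺ b` changes the relative order of no pair except
`(a, b)`, which it turns from `a` before `b` into `b` before `a`. So if `y ⊀ x`, the property
"`x` precedes `y`" can be lost along a sequence of swaps but never regained, and if `x ⊀ y` it can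
be gained but never lost; as `x ≺ y` and `y ≺ x` exclude each other, it flips at most once. -/

theorem eq_and_eq_of_precedes_of_not_precedes_swap {α : Type*} [DecidableEq α]
    (l₁ l₂ : List α) {a b x y : α} (h : Precedes (l₁ ++ a :: b :: l₂) x y)
    (h' : ¬ Precedes (l₁ ++ b :: a :: l₂) x y) : x = a ∧ y = b := by
  unfold Precedes at h h'
  induction l₁ with
  | nil =>
    simp only [List.nil_append, List.idxOf_cons, cond_eq_ite, beq_iff_eq] at h h'
    split_ifs at h h' <;> simp_all
  | cons c l₁ ih =>
    simp only [List.cons_append, List.idxOf_cons, cond_eq_ite, beq_iff_eq] at h h'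
    split_ifs at h h' <;> first | omega | exact ih (by omega) (by omega)

namespace PermissibleSwap

variable {P : Type*} [PartialOrder P] [DecidableEq P] {π σ : List P} {x y : P}

theorem precedes (h : PermissibleSwap π σ) (hxy : ¬ x < y) (hπ : Precedes π x y) :
    Precedes σ x y := by
  obtain ⟨l₁, l₂, a, b, hab, rfl, rfl⟩ := h
  by_contra hσ
  obtain ⟨rfl, rfl⟩ := eq_and_eq_of_precedes_of_not_precedes_swap l₁ l₂ hπ hσ
  exact hxy hab

theorem precedes_of_precedes (h : PermissibleSwap π σ) (hyx : ¬ y < x) (hσ : Precedes σ x y) :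
    Precedes π x y := by
  obtain ⟨l₁, l₂, a, b, hab, rfl, rfl⟩ := h
  by_contra hπ
  obtain ⟨rfl, rfl⟩ := eq_and_eq_of_precedes_of_not_precedes_swap l₁ l₂ hσ hπ
  exact hyx hab

end PermissibleSwap

section ChangeCount

open Classical

theorem card_filter_not_iff_succ_le_one_of_monotone {p : ℕ → Prop} {m : ℕ}
    (hp : ∀ k < m, p k → p (k + 1)) :
    ((Finset.range m).filter (fun i => ¬ (p i ↔ p (i + 1)))).card ≤ 1 := by
  have false_to_true : ∀ k < m, ¬ (p k ↔ p (k + 1)) → ¬ p k ∧ p (k + 1) :=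
    fun k hk hchange => by have := hp k hk; tauto
  have no_two_changes : ∀ i j, i < j → j < m →
      ¬ (p i ↔ p (i + 1)) → ¬ (p j ↔ p (j + 1)) → False := by
    intro i j hij hjm hi hj
    have persist : ∀ k, i + 1 ≤ k → k ≤ m → p k := by
      intro k hik
      induction k, hik using Nat.le_induction with
      | base => exact fun _ => (false_to_true i (by omega) hi).2
      | succ k _ ih => exact fun hkm => hp k (by omega) (ih (by omega))
    exact (false_to_true j hjm hj).1 (persist j hij hjm.le)
  rw [Finset.card_le_one]
  intro i hi j hj
  simp only [Finset.mem_filter, Finset.mem_range] at hi hj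
  rcases lt_trichotomy i j with hij | hij | hij
  · exact (no_two_changes i j hij hj.1 hi.2 hj.2).elim
  · exact hij
  · exact (no_two_changes j i hij hi.1 hj.2 hi.2).elim

theorem card_filter_not_iff_succ_le_one_of_antitone {p : ℕ → Prop} {m : ℕ}
    (hp : ∀ k < m, p (k + 1) → p k) :
    ((Finset.range m).filter (fun i => ¬ (p i ↔ p (i + 1)))).card ≤ 1 := by
  have := card_filter_not_iff_succ_le_one_of_monotone (p := fun k => ¬ p k) (m := m)
    fun k hk => mt (hp k hk)
  simpa only [not_iff_not] using this

end ChangeCount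

open Classical in
theorem stmt_1_general {P : Type*} [PartialOrder P] [DecidableEq P] (x y : P)
    (s : ℕ → List P) (m : ℕ)
    (hswap : ∀ i < m, PermissibleSwap (s i) (s (i + 1))) :
    ((Finset.range m).filter
      (fun i => ¬ (Precedes (s i) x y ↔ Precedes (s (i + 1)) x y))).card ≤ 1 := by
  by_cases hyx : y < x
  · exact card_filter_not_iff_succ_le_one_of_monotone
      fun k hk => (hswap k hk).precedes (lt_asymm hyx)
  · exact card_filter_not_iff_succ_le_one_of_antitone
      fun k hk => (hswap k hk).precedes_of_precedes hyx

open Classical in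
/-- In any sequence of permissible swaps starting from `π`, the relative
order of two distinct elements `x` and `y` changes at most once. -/
theorem stmt_1 {P : Type*} [PartialOrder P] [DecidableEq P] (π : List P)
    (hπ : IsOrdering π) (x y : P) (hxy : x ≠ y)
    (s : ℕ → List P) (m : ℕ) (hs0 : s 0 = π)
    (hswap : ∀ i < m, PermissibleSwap (s i) (s (i + 1))) :
    ((Finset.range m).filter
      (fun i => ¬ (Precedes (s i) x y ↔ Precedes (s (i + 1)) x y))).card ≤ 1 :=
  stmt_1_general x y s m hswap
end

section
/- Let (P, ≺) be a finite partially ordered set, let π be an ordering of P, and let x, y ∈ P be incomparable elements (neither x ≺ y nor y ≺ x). If x precedes y in π, then x precedes y in every ordering σ reachable from π. -/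
/- A permissible swap exchanges the entries at positions `k` and `k + 1`, so it acts on
first-occurrence indices as the transposition `(k k+1)`. That transposition preserves `i < j`
except for `(i, j) = (k, k + 1)`, which would force `(x, y)` to be the swapped comparable pair. -/

theorem Equiv.swap_succ_lt_swap_succ {i j k : ℕ} (hij : i < j) (hk : ¬(i = k ∧ j = k + 1)) :
    Equiv.swap k (k + 1) i < Equiv.swap k (k + 1) j := by
  simp only [Equiv.swap_apply_def]
  split_ifs <;> omega

theorem List.idxOf_append_cons_cons_swap {α : Type*} [DecidableEq α] {l₁ l₂ : List α}
    {a b : α} (hab : a ≠ b) (z : α) :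
    (l₁ ++ b :: a :: l₂).idxOf z =
      Equiv.swap l₁.length (l₁.length + 1) ((l₁ ++ a :: b :: l₂).idxOf z) := by
  by_cases hz : z ∈ l₁
  · have hlt : l₁.idxOf z < l₁.length := List.idxOf_lt_length_of_mem hz
    rw [List.idxOf_append_of_mem hz, List.idxOf_append_of_mem hz,
      Equiv.swap_apply_of_ne_of_ne (by omega) (by omega)]
  · rw [List.idxOf_append_of_notMem hz, List.idxOf_append_of_notMem hz]
    by_cases hza : z = a
    · rw [hza, List.idxOf_cons_ne _ (Ne.symm hab), List.idxOf_cons_self, List.idxOf_cons_self]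
      simp
    by_cases hzb : z = b
    · rw [hzb, List.idxOf_cons_ne _ hab, List.idxOf_cons_self, List.idxOf_cons_self]
      simp
    rw [List.idxOf_cons_ne _ (Ne.symm hzb), List.idxOf_cons_ne _ (Ne.symm hza),
      List.idxOf_cons_ne _ (Ne.symm hza), List.idxOf_cons_ne _ (Ne.symm hzb),
      Equiv.swap_apply_of_ne_of_ne (by omega) (by omega)]

theorem PermissibleSwap.precedes_s2 {P : Type*} [PartialOrder P] [DecidableEq P] {π σ : List P}
    (h : PermissibleSwap π σ) {x y : P} (hxy : Incomp x y)
    (hprec : Precedes π x y) : Precedes σ x y := by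
  obtain ⟨l₁, l₂, a, b, hab, rfl, rfl⟩ := h
  unfold Precedes at hprec ⊢
  rw [List.idxOf_append_cons_cons_swap hab.ne, List.idxOf_append_cons_cons_swap hab.ne]
  refine Equiv.swap_succ_lt_swap_succ hprec fun ⟨hx, hy⟩ => hxy.1 ?_
  have hlen : l₁.length + 1 < (l₁ ++ a :: b :: l₂).length := by simp
  have hxa : x = a := by
    have := List.getElem_idxOf (x := x) (xs := l₁ ++ a :: b :: l₂) (by omega)
    simp_all
  have hyb : y = b := by
    have := List.getElem_idxOf (x := y) (xs := l₁ ++ a :: b :: l₂) (by omega)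
    simp_all
  exact hxa ▸ hyb ▸ hab

theorem stmt_2_general {P : Type*} [PartialOrder P] [DecidableEq P] (π : List P)
    (x y : P) (hincomp : Incomp x y) (hprec : Precedes π x y) :
    ∀ σ : List P, Reachable π σ → Precedes σ x y := by
  intro σ hreach
  induction hreach with
  | refl => exact hprec
  | tail _ hswap ih => exact hswap.precedes_s2 hincomp ih

/-- If `x ∥ y` and `x` precedes `y` in `π`, then `x` precedes `y` in every
ordering reachable from `π`. -/
theorem stmt_2 {P : Type*} [PartialOrder P] [DecidableEq P] (π : List P)
    (hπ : IsOrdering π) (x y : P) (hincomp : Incomp x y) (hprec : Precedes π x y) :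
    ∀ σ : List P, Reachable π σ → Precedes σ x y :=
  stmt_2_general π x y hincomp hprec
end

section
/- Let (P, ≺) be a finite partially ordered set, let π be an ordering of P, and let σ be an ordering reachable from π. Then for all x, y ∈ P, there exists an (x,y)-fence in σ if and only if there exists an (x,y)-fence in π; that is, no sequence of permissible swaps can create or eliminate an (x,y)-fence. -/
/-- The letters `a`, `b` are adjacent in `l₁ ++ a :: b :: l₂`, so a subsequence containing both
has them adjacent too, and an `R`-chain then forces `R a b`. -/
theorem List.IsChain.sublist_swap {α : Type*} {R : α → α → Prop} {c l₁ l₂ : List α} {a b : α}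
    (hc : c.IsChain R) (hab : ¬ R a b) (hsub : c.Sublist (l₁ ++ a :: b :: l₂)) :
    c.Sublist (l₁ ++ b :: a :: l₂) := by
  obtain ⟨u, v, rfl, hu, hv⟩ := List.sublist_append_iff.mp hsub
  refine List.sublist_append_iff.mpr ⟨u, v, rfl, hu, ?_⟩
  rcases List.sublist_cons_iff.mp hv with hv | ⟨v', rfl, hv'⟩
  · exact hv.trans (List.cons_sublist_cons.mpr (List.sublist_cons_self a l₂))
  rcases List.sublist_cons_iff.mp hv' with hv'' | ⟨v'', rfl, -⟩
  · exact (List.cons_sublist_cons.mpr hv'').trans (List.sublist_cons_self b (a :: l₂))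
  · exact absurd (List.isChain_cons_cons.mp (List.isChain_append.mp hc).2.1).1 hab

theorem hasFence_swap {P : Type*} [PartialOrder P] {l₁ l₂ : List P} {a b : P}
    (hab : ¬ Incomp a b) {x y : P} (h : HasFence (l₁ ++ a :: b :: l₂) x y) :
    HasFence (l₁ ++ b :: a :: l₂) x y := by
  obtain ⟨c, hchain, hsub, hhead, hlast⟩ := h
  exact ⟨c, hchain, hchain.sublist_swap hab hsub, hhead, hlast⟩

theorem PermissibleSwap.hasFence_iff {P : Type*} [PartialOrder P] {π σ : List P}
    (h : PermissibleSwap π σ) (x y : P) : HasFence σ x y ↔ HasFence π x y := by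
  obtain ⟨l₁, l₂, a, b, hab, rfl, rfl⟩ := h
  exact ⟨hasFence_swap fun hc => hc.2 hab, hasFence_swap fun hc => hc.1 hab⟩

theorem stmt_4_general {P : Type*} [PartialOrder P] (π : List P)
    (σ : List P) (hreach : Reachable π σ) :
    ∀ x y : P, HasFence σ x y ↔ HasFence π x y := by
  induction hreach with
  | refl => exact fun _ _ => Iff.rfl
  | tail _ hswap ih => exact fun x y => (hswap.hasFence_iff x y).trans (ih x y)

/-- Permissible swaps can neither create nor eliminate an `(x,y)`-fence:
if `σ` is reachable from `π`, then `σ` has an `(x,y)`-fence iff `π` does. -/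
theorem stmt_4 {P : Type*} [PartialOrder P] (π : List P) (hπ : IsOrdering π)
    (σ : List P) (hreach : Reachable π σ) :
    ∀ x y : P, HasFence σ x y ↔ HasFence π x y :=
  stmt_4_general π σ hreach
end

section
/- Let (P, ≺) be a finite partially ordered set and let τ be a terminal ordering of P. Then τ contains no critical pair; that is, there are no elements x, y with x ≺ y, x preceding y in τ, and no (x,y)-fence in τ. -/
/-!
Induct along the ordering, proving more generally that whenever `x` occurs before `y` and
`¬ y < x`, there is an `(x, y)`-fence. Let `w` be the element just before `y`; terminality
gives `¬ w < y`. If `x ∥ y` we are done; otherwise `x < y`, hence `¬ w < x`, and induction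
yields a fence from `x` to `w`. Its first element lies below `y` and its last one does not.
At the first element `z` of the fence not below `y` we have `z ∥ y`, because `y < z` would put
the (incomparable) predecessor of `z` below `z`; so the fence cut at `z`, followed by `y`, is an
`(x, y)`-fence.
-/

theorem List.pair_sublist_append_singleton {α : Type*} {ρ : List α} {x y z : α}
    (h : [x, y].Sublist (ρ ++ [z])) : [x, y].Sublist ρ ∨ (x ∈ ρ ∧ y = z) := by
  have h' : [y, x].Sublist (z :: ρ.reverse) := by simpa using List.reverse_sublist.mpr h
  cases h' with
  | cons _ h => exact .inl (by simpa using List.reverse_sublist.mpr h)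
  | cons_cons _ h => exact .inr ⟨by simpa using h, rfl⟩

theorem List.pair_sublist_of_idxOf_lt {α : Type*} [DecidableEq α] {π : List α} {x y : α}
    (hy : y ∈ π) (h : π.idxOf x < π.idxOf y) : [x, y].Sublist π := by
  induction π with
  | nil => simp at hy
  | cons a π ih =>
    by_cases hax : a = x
    · subst hax
      have hya : y ≠ a := by rintro rfl; simp at h
      simpa [hya] using hy
    · by_cases hay : a = y
      · subst hay; simp at h
      · simp only [List.idxOf_cons_ne π hax, List.idxOf_cons_ne π hay] at h
        exact (ih (by simpa [Ne.symm hay] using hy) (by omega)).cons a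

section Fence

variable {P : Type*} [PartialOrder P]

theorem PermissibleSwap.append_right {π σ : List P} (h : PermissibleSwap π σ) (l : List P) :
    PermissibleSwap (π ++ l) (σ ++ l) := by
  obtain ⟨l₁, l₂, a, b, hab, rfl, rfl⟩ := h
  exact ⟨l₁, l₂ ++ l, a, b, hab, by simp, by simp⟩

theorem Terminal.of_append {π : List P} (l : List P) (h : Terminal (π ++ l)) : Terminal π :=
  fun _ hσ => h _ (hσ.append_right l)

theorem Terminal.not_lt {l₁ l₂ : List P} {a b : P} (h : Terminal (l₁ ++ a :: b :: l₂)) :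
    ¬ a < b :=
  fun hab => h _ ⟨l₁, l₂, a, b, hab, rfl, rfl⟩

theorem HasFence.mono {π π' : List P} {x y : P} (h : HasFence π x y) (hπ : π.Sublist π') :
    HasFence π' x y :=
  let ⟨c, hchain, hsub, hhead, hlast⟩ := h
  ⟨c, hchain, hsub.trans hπ, hhead, hlast⟩

theorem hasFence_self {π : List P} {x : P} (hx : x ∈ π) : HasFence π x x :=
  ⟨[x], List.isChain_singleton x, List.singleton_sublist.mpr hx, rfl, rfl⟩

theorem hasFence_pair {π : List P} {x y : P} (hxy : Incomp x y) (h : [x, y].Sublist π) :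
    HasFence π x y :=
  ⟨[x, y], List.isChain_pair.mpr hxy, h, rfl, rfl⟩

theorem HasFence.cons {π : List P} {x z y : P} (h : HasFence π z y) (hxz : Incomp x z) :
    HasFence (x :: π) x y := by
  obtain ⟨_ | ⟨a, c⟩, hchain, hsub, hhead, hlast⟩ := h
  · simp at hhead
  obtain rfl : a = z := by simpa using hhead
  exact ⟨x :: a :: c, hchain.cons_cons hxz, hsub.cons_cons x, rfl, by simpa using hlast⟩

theorem hasFence_append_singleton {c : List P} {x w y : P} (hc : c.IsChain Incomp)
    (hhead : c.head? = some x) (hlast : c.getLast? = some w) (hxy : x < y) (hwy : ¬ w < y) :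
    HasFence (c ++ [y]) x y := by
  induction c generalizing x with
  | nil => simp at hhead
  | cons a c ih =>
    obtain rfl : a = x := by simpa using hhead
    cases c with
    | nil => simp_all
    | cons z c =>
      obtain ⟨hxz, hzc⟩ := List.isChain_cons_cons.mp hc
      by_cases hzy : z < y
      · exact (ih hzc rfl (by simpa using hlast) hzy).cons hxz
      · have hyz : ¬ y < z := fun hyz => hxz.1 (hxy.trans hyz)
        refine ⟨[a, z, y], ?_, ?_, rfl, rfl⟩
        · exact List.isChain_cons_cons.mpr ⟨hxz, List.isChain_pair.mpr ⟨hzy, hyz⟩⟩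
        · simp

theorem Terminal.hasFence_of_sublist {π : List P} (hπ : Terminal π) {x y : P} (hyx : ¬ y < x)
    (hsub : [x, y].Sublist π) : HasFence π x y := by
  induction π using List.reverseRecOn generalizing x y with
  | nil => simp at hsub
  | append_singleton ρ z ih =>
    have hρ : Terminal ρ := hπ.of_append [z]
    rcases List.pair_sublist_append_singleton hsub with hsub | ⟨hx, rfl⟩
    · exact (ih hρ hyx hsub).mono (List.sublist_append_left ρ _)
    by_cases hinc : Incomp x y
    · exact hasFence_pair hinc hsub
    have hxy : x < y := by unfold Incomp at hinc; tauto
    obtain ⟨ρ, w, rfl⟩ : ∃ ρ' w, ρ = ρ' ++ [w] :=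
      ⟨ρ.dropLast, ρ.getLast (List.ne_nil_of_mem hx), (List.dropLast_append_getLast _).symm⟩
    have hwy : ¬ w < y := Terminal.not_lt (l₂ := []) (by simpa using hπ)
    obtain ⟨c, hchain, hsubc, hhead, hlast⟩ : HasFence (ρ ++ [w]) x w := by
      rcases List.mem_append.mp hx with hx | hx
      · exact ih hρ (fun hwx => hwy (hwx.trans hxy))
          ((List.singleton_sublist.mpr hx).append (List.Sublist.refl [w]))
      · obtain rfl := List.mem_singleton.mp hx
        exact hasFence_self (by simp)
    exact (hasFence_append_singleton hchain hhead hlast hxy hwy).mono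
      (hsubc.append (List.Sublist.refl [y]))

end Fence

/-- A terminal ordering contains no critical pair. -/
theorem stmt_5 {P : Type*} [PartialOrder P] [DecidableEq P] (τ : List P)
    (hτ : IsOrdering τ) (hterm : Terminal τ) :
    ∀ x y : P, ¬ Critical τ x y := by
  rintro x y ⟨hxy, hprec, hnf⟩
  exact hnf (hterm.hasFence_of_sublist hxy.not_gt (List.pair_sublist_of_idxOf_lt (hτ.2 y) hprec))
end

section
/- Let (P, ≺) be a finite partially ordered set and let π be an ordering of P. Then there is exactly one terminal ordering reachable from π: if τ and τ' are terminal orderings both reachable from π, then τ = τ'. -/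
/-!
Permissible swaps form a terminating rewriting system: each swap destroys one pair of positions
`i < j` carrying an increasing pair `π[i] < π[j]` and creates none. It is also locally confluent:
two swaps at disjoint positions commute, and two overlapping swaps `a b c ↦ b a c`, `a b c ↦ a c b`
(with `a < b < c`) both lead to `c b a`. Newman's lemma then gives a unique terminal reduct.
-/

namespace Relation

variable {α : Type*} {r : α → α → Prop}

theorem exists_reflTransGen_normal (hr : WellFounded (flip r)) (a : α) :
    ∃ b, ReflTransGen r a b ∧ ∀ c, ¬ r b c := by
  induction a using hr.induction with
  | _ a ih =>
    by_cases h : ∃ b, r a b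
    · obtain ⟨b, hab⟩ := h
      obtain ⟨c, hbc, hc⟩ := ih b hab
      exact ⟨c, .head hab hbc, hc⟩
    · push Not at h
      exact ⟨a, .refl, h⟩

/-- Newman's lemma, in the form of uniqueness of normal forms. -/
theorem eq_of_reflTransGen_normal (hr : WellFounded (flip r))
    (hlc : ∀ a b c, r a b → r a c → Join (ReflTransGen r) b c) {a b c : α}
    (hab : ReflTransGen r a b) (hb : ∀ d, ¬ r b d)
    (hac : ReflTransGen r a c) (hc : ∀ d, ¬ r c d) : b = c := by
  induction a using hr.induction generalizing b c with
  | _ a ih =>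
    rcases hab.cases_head with rfl | ⟨b₁, hab₁, hb₁b⟩
    · rcases hac.cases_head with rfl | ⟨c₁, hac₁, -⟩
      · rfl
      · exact absurd hac₁ (hb c₁)
    rcases hac.cases_head with rfl | ⟨c₁, hac₁, hc₁c⟩
    · exact absurd hab₁ (hc b₁)
    obtain ⟨d, hb₁d, hc₁d⟩ := hlc a b₁ c₁ hab₁ hac₁
    obtain ⟨e, hde, he⟩ := exists_reflTransGen_normal hr d
    calc b = e := ih b₁ hab₁ hb₁b hb (hb₁d.trans hde) he
      _ = c := (ih c₁ hac₁ hc₁c hc (hc₁d.trans hde) he).symm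

end Relation

section Swaps

variable {P : Type*} [PartialOrder P]

theorem permissibleSwap_of_lt {a b : P} (hab : a < b) (l₁ l₂ : List P) :
    PermissibleSwap (l₁ ++ a :: b :: l₂) (l₁ ++ b :: a :: l₂) :=
  ⟨l₁, l₂, a, b, hab, rfl, rfl⟩

open Classical in
/-- The number of pairs of positions `i < j` with `l[i] < l[j]`. -/
noncomputable def increasingPairs : List P → ℕ
  | [] => 0
  | x :: xs => xs.countP (fun y => decide (x < y)) + increasingPairs xs

theorem increasingPairs_swap {a b : P} (hab : a < b) (l₁ l₂ : List P) :
    increasingPairs (l₁ ++ b :: a :: l₂) + 1 = increasingPairs (l₁ ++ a :: b :: l₂) := by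
  induction l₁ with
  | nil =>
    simp only [List.nil_append, increasingPairs, List.countP_cons, hab, asymm hab, decide_true,
      decide_false, if_true, Bool.false_eq_true, if_false]
    ring
  | cons x t ih =>
    classical
    have hperm := ((List.Perm.swap a b l₂).append_left t).countP_eq
      (fun y => decide (x < y))
    simp only [List.cons_append, increasingPairs] at *
    omega

theorem PermissibleSwap.increasingPairs_lt {π σ : List P} (h : PermissibleSwap π σ) :
    increasingPairs σ < increasingPairs π := by
  obtain ⟨l₁, l₂, a, b, hab, rfl, rfl⟩ := h
  have := increasingPairs_swap hab l₁ l₂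
  omega

theorem wellFounded_flip_permissibleSwap :
    WellFounded (flip (PermissibleSwap : List P → List P → Prop)) :=
  Subrelation.wf (fun h => h.increasingPairs_lt) (measure increasingPairs).wf

/-- Two swaps of `l₁ ++ a :: b :: l₂`, the second one at position `|l₁ ++ t| ≥ |l₁|`. -/
theorem join_permissibleSwap_of_append_eq {a b c d : P} (hab : a < b) (hcd : c < d)
    (l₁ t l₂ m₂ : List P) (ht : a :: b :: l₂ = t ++ c :: d :: m₂) :
    Relation.Join Reachable (l₁ ++ b :: a :: l₂) (l₁ ++ t ++ d :: c :: m₂) := by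
  rcases t with _ | ⟨x, _ | ⟨y, t'⟩⟩
  · obtain ⟨rfl, rfl, rfl⟩ : a = c ∧ b = d ∧ l₂ = m₂ := by simpa using ht
    rw [List.append_nil]
    exact ⟨_, Relation.ReflTransGen.refl, Relation.ReflTransGen.refl⟩
  · obtain ⟨rfl, rfl, rfl⟩ : a = x ∧ b = c ∧ l₂ = d :: m₂ := by simpa using ht
    have had : a < d := hab.trans hcd
    refine ⟨l₁ ++ d :: b :: a :: m₂, ?_, ?_⟩
    · refine Relation.ReflTransGen.head (b := l₁ ++ b :: d :: a :: m₂) ?_ (.single ?_)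
      · simpa using permissibleSwap_of_lt had (l₁ ++ [b]) m₂
      · exact permissibleSwap_of_lt hcd l₁ (a :: m₂)
    · refine Relation.ReflTransGen.head (b := l₁ ++ d :: a :: b :: m₂) ?_ (.single ?_)
      · simpa using permissibleSwap_of_lt had l₁ (b :: m₂)
      · simpa using permissibleSwap_of_lt hab (l₁ ++ [d]) m₂
  · obtain ⟨rfl, rfl, rfl⟩ : a = x ∧ b = y ∧ l₂ = t' ++ c :: d :: m₂ := by simpa using ht
    refine ⟨l₁ ++ b :: a :: (t' ++ d :: c :: m₂), Relation.ReflTransGen.single ?_,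
      Relation.ReflTransGen.single ?_⟩
    · simpa using permissibleSwap_of_lt hcd (l₁ ++ b :: a :: t') m₂
    · simpa using permissibleSwap_of_lt hab l₁ (t' ++ d :: c :: m₂)

theorem join_of_permissibleSwap {π σ₁ σ₂ : List P}
    (h₁ : PermissibleSwap π σ₁) (h₂ : PermissibleSwap π σ₂) :
    Relation.Join Reachable σ₁ σ₂ := by
  obtain ⟨l₁, l₂, a, b, hab, rfl, rfl⟩ := h₁
  obtain ⟨m₁, m₂, c, d, hcd, heq, rfl⟩ := h₂
  rcases List.append_eq_append_iff.mp heq with ⟨t, rfl, ht⟩ | ⟨t, rfl, ht⟩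
  · exact join_permissibleSwap_of_append_eq hab hcd l₁ t l₂ m₂ ht
  · exact symm (join_permissibleSwap_of_append_eq hcd hab m₁ t m₂ l₂ ht)

end Swaps

theorem stmt_9_general {P : Type*} [PartialOrder P] (π : List P) :
    ∃! τ : List P, Reachable π τ ∧ Terminal τ := by
  obtain ⟨τ, hπτ, hτ⟩ := Relation.exists_reflTransGen_normal wellFounded_flip_permissibleSwap π
  refine ⟨τ, ⟨hπτ, hτ⟩, fun τ' ⟨hπτ', hτ'⟩ => ?_⟩
  exact Relation.eq_of_reflTransGen_normal wellFounded_flip_permissibleSwap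
    (fun _ _ _ => join_of_permissibleSwap) hπτ' hτ' hπτ hτ

/-- There is exactly one terminal ordering reachable from `π`. -/
theorem stmt_9 {P : Type*} [PartialOrder P] [Fintype P] (π : List P)
    (hπ : IsOrdering π) :
    ∃! τ : List P, Reachable π τ ∧ Terminal τ :=
  stmt_9_general π
end

section
/- Let (P, ≺) be a finite partially ordered set and let π be an ordering of P. Then the length of any maximal sequence of permissible swaps starting from π equals the number of critical pairs in π. -/
/-!
Swapping adjacent `a ≺ b` changes no fence: consecutive elements of a fence are incomparable, so no
fence has `a` and `b` next to each other, and then it is also a fence of the swapped ordering. As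
the relative order of every other pair is unchanged too, the swap destroys the critical pair
`(a, b)` and creates none. A terminal ordering has no critical pair: if `x ≺ y` and `x` comes
first, scan the elements after `x`, skipping those below the current end `e` of the fence and
appending the first one incomparable to `e`. A skipped `u ≺ e` is never followed by some `v ≻ e`, as terminality
gives `¬ u ≺ v`; hence the scan reaches `y` with a fence. So each swap lowers the number of critical
pairs by one, and it is zero when the sequence stops.
-/

open List

theorem List.Sublist.swap_of_not_infix {α : Type*} {c l₁ l₂ : List α} {a b : α}
    (h : c <+ l₁ ++ a :: b :: l₂) (hab : ¬ [a, b] <:+: c) : c <+ l₁ ++ b :: a :: l₂ := by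
  obtain ⟨c₁, c₂, rfl, h₁, h₂⟩ := sublist_append_iff.mp h
  refine h₁.append ?_
  rcases sublist_cons_iff.mp h₂ with h₂ | ⟨r, rfl, hr⟩
  · exact h₂.trans ((sublist_cons_self a l₂).cons_cons b)
  · rcases sublist_cons_iff.mp hr with hr | ⟨r', rfl, -⟩
    · exact (hr.cons_cons a).trans (sublist_cons_self b _)
    · exact absurd ⟨c₁, r', by simp⟩ hab

theorem precedes_iff_pair_sublist {α : Type*} [DecidableEq α] {l : List α} {x y : α}
    (hl : l.Nodup) (hy : y ∈ l) : Precedes l x y ↔ [x, y] <+ l := by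
  induction l with
  | nil => simp at hy
  | cons z t ih =>
    obtain ⟨hzt, ht⟩ := nodup_cons.mp hl
    unfold Precedes at *
    by_cases hyz : y = z
    · subst hyz
      simpa [idxOf_cons_self, sublist_cons_iff, hzt] using
        fun (h : [x, y] <+ t) => hzt (h.subset (by simp))
    · have hyt : y ∈ t := (mem_cons.mp hy).resolve_left hyz
      by_cases hxz : x = z
      · subst hxz
        simp [idxOf_cons_self, idxOf_cons_ne _ (Ne.symm hyz), hyt]
      · simp [idxOf_cons_ne _ (Ne.symm hyz), idxOf_cons_ne _ (Ne.symm hxz), sublist_cons_iff, hxz,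
          ih ht hyt]

theorem List.Nodup.not_pair_sublist_of_pair_sublist {α : Type*} {l : List α} {x y : α}
    (hl : l.Nodup) (h : [x, y] <+ l) : ¬ [y, x] <+ l := by
  classical
  intro h'
  exact lt_asymm ((precedes_iff_pair_sublist hl (h.subset (by simp))).mpr h)
    ((precedes_iff_pair_sublist hl (h'.subset (by simp))).mpr h')

theorem IsOrdering.finite {α : Type*} {π : List α} (hπ : IsOrdering π) : Finite α :=
  Set.finite_univ_iff.mp ((finite_toSet π).subset fun x _ => hπ.2 x)

section Fences

variable {P : Type*} [PartialOrder P]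

theorem IsFence.swap {l₁ l₂ c : List P} {a b x y : P} (hc : IsFence (l₁ ++ a :: b :: l₂) x y c)
    (hab : ¬ Incomp a b) : IsFence (l₁ ++ b :: a :: l₂) x y c :=
  ⟨hc.1, hc.2.1.swap_of_not_infix fun h => hab (by simpa using hc.1.infix h), hc.2.2⟩

theorem hasFence_swap_iff {l₁ l₂ : List P} {a b x y : P} (hab : a < b) :
    HasFence (l₁ ++ b :: a :: l₂) x y ↔ HasFence (l₁ ++ a :: b :: l₂) x y :=
  ⟨fun ⟨c, hc⟩ => ⟨c, hc.swap fun h => h.2 hab⟩, fun ⟨c, hc⟩ => ⟨c, hc.swap fun h => h.1 hab⟩⟩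

theorem IsFence.pair_sublist {l c : List P} {x y : P} (hc : IsFence l x y c) (hxy : x ≠ y) :
    [x, y] <+ l := by
  obtain ⟨-, hsub, hx, hy⟩ := hc
  obtain ⟨c, rfl⟩ : ∃ c', c = x :: c' := by
    cases c with
    | nil => simp at hx
    | cons z c => exact ⟨c, by simpa using hx⟩
  have hyc : y ∈ c := (mem_cons.mp (mem_of_getLast? hy)).resolve_left hxy.symm
  exact ((singleton_sublist.mpr hyc).cons_cons x).trans hsub

theorem exists_incomp_chain_of_isChain_not_lt {t : List P} {a y : P}
    (ht : (a :: t).IsChain (¬ · < ·)) (hy : y ∈ t) (hay : a < y) :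
    ∃ c, c <+ t ∧ (a :: c).IsChain Incomp ∧ c.getLast? = some y := by
  induction t generalizing a with
  | nil => simp at hy
  | cons u t ih =>
    obtain ⟨hau, hut⟩ := isChain_cons_cons.mp ht
    have hyt : y ∈ t := (mem_cons.mp hy).resolve_left (by rintro rfl; exact hau hay)
    by_cases hua : u < a
    · have hat : (a :: t).IsChain (¬ · < ·) :=
        isChain_cons.mpr ⟨fun v hv hav => (isChain_cons.mp hut).1 v hv (hua.trans hav), hut.tail⟩
      obtain ⟨c, hc, hac, hcy⟩ := ih hat hyt hay
      exact ⟨c, hc.cons u, hac, hcy⟩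
    · have hinc : Incomp a u := ⟨hau, hua⟩
      by_cases huy : u < y
      · obtain ⟨c, hc, huc, hcy⟩ := ih hut hyt huy
        exact ⟨u :: c, hc.cons_cons u, isChain_cons_cons.mpr ⟨hinc, huc⟩,
          by rw [getLast?_cons, hcy]; rfl⟩
      · have hyu : ¬ y < u := fun hyu => hau (hay.trans hyu)
        exact ⟨[u, y], (singleton_sublist.mpr hyt).cons_cons u,
          isChain_cons_cons.mpr ⟨hinc, isChain_pair.mpr ⟨huy, hyu⟩⟩, rfl⟩

theorem hasFence_of_isChain_not_lt {π : List P} {x y : P} (hπ : π.IsChain (¬ · < ·))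
    (hxy : [x, y] <+ π) (hlt : x < y) : HasFence π x y := by
  obtain ⟨r₁, r₂, rfl, hx, hy⟩ := cons_sublist_iff.mp hxy
  obtain ⟨s, t, rfl⟩ := append_of_mem hx
  have hsuf : x :: (t ++ r₂) <:+ s ++ x :: t ++ r₂ := ⟨s, by simp⟩
  obtain ⟨c, hc, hxc, hcy⟩ := exists_incomp_chain_of_isChain_not_lt (hπ.suffix hsuf)
    (mem_append_right t (singleton_sublist.mp hy)) hlt
  exact ⟨x :: c, hxc, (hc.cons_cons x).trans hsuf.sublist, rfl, by rw [getLast?_cons, hcy]; rfl⟩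

theorem Terminal.isChain_not_lt {π : List P} (h : Terminal π) : π.IsChain (¬ · < ·) :=
  isChain_iff_forall_rel_of_append_cons_cons.mpr fun a b l₁ l₂ hπ hab =>
    h _ ⟨l₁, l₂, a, b, hab, hπ, rfl⟩

theorem IsOrdering.of_permissibleSwap {π σ : List P} (hπ : IsOrdering π)
    (h : PermissibleSwap π σ) : IsOrdering σ := by
  obtain ⟨l₁, l₂, a, b, -, rfl, rfl⟩ := h
  have hperm : (l₁ ++ a :: b :: l₂).Perm (l₁ ++ b :: a :: l₂) := (Perm.swap b a l₂).append_left l₁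
  exact ⟨hperm.nodup_iff.mp hπ.1, fun x => hperm.mem_iff.mp (hπ.2 x)⟩

end Fences

section CriticalPairs

variable {P : Type*} [PartialOrder P] [DecidableEq P]

def criticalPairs (π : List P) : Set (P × P) := {p | Critical π p.1 p.2}

theorem criticalPairs_eq_empty_of_terminal {π : List P} (hπ : IsOrdering π) (h : Terminal π) :
    criticalPairs π = ∅ :=
  Set.eq_empty_of_forall_notMem fun ⟨_, y⟩ ⟨hxy, hprec, hnf⟩ => hnf <|
    hasFence_of_isChain_not_lt h.isChain_not_lt
      ((precedes_iff_pair_sublist hπ.1 (hπ.2 y)).mp hprec) hxy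

variable {l₁ l₂ : List P} {a b : P}

theorem criticalPairs_swap (hπ : IsOrdering (l₁ ++ a :: b :: l₂)) (hab : a < b) :
    criticalPairs (l₁ ++ b :: a :: l₂) = criticalPairs (l₁ ++ a :: b :: l₂) \ {(a, b)} := by
  have hσ := hπ.of_permissibleSwap ⟨l₁, l₂, a, b, hab, rfl, rfl⟩
  have hba : ¬ [a, b] <+ l₁ ++ b :: a :: l₂ :=
    hσ.1.not_pair_sublist_of_pair_sublist (by simp)
  ext ⟨x, y⟩
  simp only [criticalPairs, Critical, Set.mem_sdiff, Set.mem_singleton_iff, Set.mem_ofPred_eq,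
    Prod.mk.injEq, precedes_iff_pair_sublist hπ.1 (hπ.2 y),
    precedes_iff_pair_sublist hσ.1 (hσ.2 y), hasFence_swap_iff hab]
  constructor
  · rintro ⟨hxy, hs, hnf⟩
    refine ⟨⟨hxy, hs.swap_of_not_infix fun h => ?_, hnf⟩, ?_⟩
    · obtain ⟨rfl, rfl⟩ : b = x ∧ a = y := by simpa using h.eq_of_length rfl
      exact lt_asymm hab hxy
    · rintro ⟨rfl, rfl⟩
      exact hba hs
  · rintro ⟨⟨hxy, hs, hnf⟩, hne⟩
    refine ⟨hxy, hs.swap_of_not_infix fun h => hne ?_, hnf⟩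
    simpa [eq_comm] using h.eq_of_length rfl

theorem swapped_pair_mem_criticalPairs (hπ : IsOrdering (l₁ ++ a :: b :: l₂)) (hab : a < b) :
    (a, b) ∈ criticalPairs (l₁ ++ a :: b :: l₂) := by
  have hσ := hπ.of_permissibleSwap ⟨l₁, l₂, a, b, hab, rfl, rfl⟩
  refine ⟨hab, (precedes_iff_pair_sublist hπ.1 (hπ.2 b)).mpr (by simp), fun hf => ?_⟩
  obtain ⟨c, hc⟩ := (hasFence_swap_iff hab).mpr hf
  exact hσ.1.not_pair_sublist_of_pair_sublist (by simp) (hc.pair_sublist hab.ne)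

theorem ncard_criticalPairs_of_permissibleSwap {π σ : List P} (hπ : IsOrdering π)
    (h : PermissibleSwap π σ) : (criticalPairs σ).ncard + 1 = (criticalPairs π).ncard := by
  obtain ⟨l₁, l₂, a, b, hab, rfl, rfl⟩ := h
  have := hπ.finite
  rw [criticalPairs_swap hπ hab]
  exact Set.ncard_sdiff_singleton_add_one (swapped_pair_mem_criticalPairs hπ hab) (Set.toFinite _)

end CriticalPairs

/-- The length of any maximal sequence of permissible swaps starting from
`π` equals the number of critical pairs in `π`. -/
theorem stmt_11 {P : Type*} [PartialOrder P] [DecidableEq P] (π : List P)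
    (hπ : IsOrdering π) (s : ℕ → List P) (m : ℕ)
    (hs0 : s 0 = π) (hswap : ∀ i < m, PermissibleSwap (s i) (s (i + 1)))
    (hterm : Terminal (s m)) :
    m = {p : P × P | Critical π p.1 p.2}.ncard := by
  subst hs0
  change m = (criticalPairs (s 0)).ncard
  induction m generalizing s with
  | zero => rw [criticalPairs_eq_empty_of_terminal hπ hterm, Set.ncard_empty]
  | succ m ih =>
    have hstep := hswap 0 m.succ_pos
    have hrest := ih (fun i => s (i + 1)) (fun i hi => hswap (i + 1) (by omega)) hterm
      (hπ.of_permissibleSwap hstep)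
    rw [← ncard_criticalPairs_of_permissibleSwap hπ hstep, ← hrest]
end

section
/- Let (P, ≺) be a finite partially ordered set, let τ be an ordering of P, and suppose x ≺ y, x precedes y in τ, there is no (x,y)-fence in τ, and every pair of elements of P separated by fewer elements of τ than x and y are is not critical in any terminal ordering. If moreover no pair of elements separated in τ by fewer elements than separate x and y is critical when τ is terminal, then for every element z lying strictly between x and y in a terminal τ, either z ≺ x and z ≺ y (z is "small") or x ≺ z and y ≺ z (z is "large"). -/
/-! If `z` is neither small nor large, then (as `x ≺ y`) neither `z ≺ x` nor `y ≺ z`. Each of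
the pairs `(x, z)` and `(z, y)` is then either incomparable, hence a two-element fence, or
comparable but closer in `τ` than `(x, y)` and therefore not critical, hence again joined by a
fence. Gluing the two fences at `z` gives an `(x, y)`-fence, which does not exist. -/

namespace List

variable {α : Type*}

theorem pair_sublist_of_idxOf_lt_s12 [DecidableEq α] {a b : α} :
    ∀ {l : List α}, b ∈ l → l.idxOf a < l.idxOf b → [a, b] <+ l
  | [], hb, _ => absurd hb not_mem_nil
  | c :: l, hb, h => by
    by_cases hca : c = a
    · subst hca
      have hbc : b ≠ c := by rintro rfl; exact h.false
      exact cons_sublist_cons.2 (singleton_sublist.2 ((mem_cons.1 hb).resolve_left hbc))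
    · have hcb : c ≠ b := by rintro rfl; simp at h
      rw [idxOf_cons_ne _ hca, idxOf_cons_ne _ hcb] at h
      exact (pair_sublist_of_idxOf_lt_s12 ((mem_cons.1 hb).resolve_left hcb.symm)
        (Nat.lt_of_succ_lt_succ h)).cons c

theorem sublist_of_cons_sublist_append_cons {c l₁ l₂ : List α} {z : α} (hz : z ∉ l₁)
    (h : z :: c <+ l₁ ++ z :: l₂) : c <+ l₂ := by
  obtain ⟨_ | ⟨a, r₁⟩, r₂, heq, h₁, h₂⟩ := sublist_append_iff.1 h
  · rw [nil_append] at heq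
    exact (heq ▸ h₂).of_cons_cons
  · obtain ⟨rfl, -⟩ := cons_eq_cons.1 heq
    exact absurd (h₁.subset mem_cons_self) hz

theorem Nodup.append_cons_sublist {l c₁ c₂ : List α} {z : α} (hl : l.Nodup)
    (h₁ : c₁ ++ [z] <+ l) (h₂ : z :: c₂ <+ l) : c₁ ++ z :: c₂ <+ l := by
  obtain ⟨l₁, l₂, rfl⟩ := append_of_mem (h₂.subset mem_cons_self)
  obtain ⟨hz₁, hz₂⟩ : z ∉ l₁ ∧ z ∉ l₂ := by
    simpa using (nodup_cons.1 (nodup_middle.1 hl)).1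
  -- `z` occurs only once in `l`, so `c₁` lies before it and `c₂` after it.
  have hc₁ : c₁.reverse <+ l₁.reverse :=
    sublist_of_cons_sublist_append_cons (mt mem_reverse.1 hz₂) (by simpa using h₁.reverse)
  have hc₂ : c₂ <+ l₂ := sublist_of_cons_sublist_append_cons hz₁ h₂
  exact (reverse_sublist.1 hc₁).append (hc₂.cons_cons z)

end List

section Fence

variable {P : Type*} [PartialOrder P] {τ : List P} {x y z : P}

theorem HasFence.trans (hτ : τ.Nodup) (h₁ : HasFence τ x z) (h₂ : HasFence τ z y) :
    HasFence τ x y := by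
  obtain ⟨c₁, hch₁, hsub₁, hx, hz₁⟩ := h₁
  obtain ⟨c₂, hch₂, hsub₂, hz₂, hy⟩ := h₂
  obtain ⟨c₁, rfl⟩ := List.getLast?_eq_some_iff.1 hz₁
  obtain ⟨c₂, rfl⟩ := List.head?_eq_some_iff.1 hz₂
  refine ⟨c₁ ++ z :: c₂, List.isChain_split.2 ⟨hch₁, hch₂⟩,
    hτ.append_cons_sublist hsub₁ hsub₂, ?_, ?_⟩
  · cases c₁ <;> simpa using hx
  · simpa using hy

variable [DecidableEq P]

theorem hasFence_of_incomp (hy : y ∈ τ) (hprec : Precedes τ x y) (hxy : Incomp x y) :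
    HasFence τ x y :=
  ⟨[x, y], List.isChain_pair.2 hxy, List.pair_sublist_of_idxOf_lt_s12 hy hprec, rfl, rfl⟩

theorem hasFence_of_not_critical (hy : y ∈ τ) (hprec : Precedes τ x y) (hyx : ¬ y < x)
    (h : ¬ Critical τ x y) : HasFence τ x y := by
  by_cases hxy : x < y
  · by_contra hf
    exact h ⟨hxy, hprec, hf⟩
  · exact hasFence_of_incomp hy hprec ⟨hxy, hyx⟩

end Fence

theorem stmt_12_general {P : Type*} [PartialOrder P] [DecidableEq P] (τ : List P)
    (hτ : IsOrdering τ) (x y : P)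
    (hxy : x < y) (hfence : ¬ HasFence τ x y)
    (hind : ∀ τ' : List P, IsOrdering τ' → Terminal τ' → ∀ a b : P,
      τ'.idxOf b - τ'.idxOf a - 1 < τ.idxOf y - τ.idxOf x - 1 →
      ¬ Critical τ' a b)
    (hterm : Terminal τ) :
    ∀ z : P, Precedes τ x z → Precedes τ z y →
      (z < x ∧ z < y) ∨ (x < z ∧ y < z) := by
  intro z hxz hzy
  by_cases hzx : z < x
  · exact .inl ⟨hzx, hzx.trans hxy⟩
  by_cases hyz : y < z
  · exact .inr ⟨hxy.trans hyz, hyz⟩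
  unfold Precedes at hxz hzy
  have hfence_xz : HasFence τ x z := hasFence_of_not_critical (hτ.2 z) hxz hzx
    (hind τ hτ hterm x z (by omega))
  have hfence_zy : HasFence τ z y := hasFence_of_not_critical (hτ.2 y) hzy hyz
    (hind τ hτ hterm z y (by omega))
  exact absurd (HasFence.trans hτ.1 hfence_xz hfence_zy) hfence

/-- Induction step of the main proof. Suppose `x ≺ y`, `x` precedes `y`
in `τ`, there is no `(x,y)`-fence in `τ`, and (induction hypothesis) every pair of
elements separated by fewer elements than `x` and `y` are in `τ` is not critical in any
terminal ordering. If moreover `τ` is terminal, then every `z` lying strictly between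
`x` and `y` in `τ` is either "small" (`z ≺ x` and `z ≺ y`) or "large" (`x ≺ z` and
`y ≺ z`). -/
theorem stmt_12 {P : Type*} [PartialOrder P] [DecidableEq P] (τ : List P)
    (hτ : IsOrdering τ) (x y : P)
    (hxy : x < y) (hprec : Precedes τ x y) (hfence : ¬ HasFence τ x y)
    (hind : ∀ τ' : List P, IsOrdering τ' → Terminal τ' → ∀ a b : P,
      τ'.idxOf b - τ'.idxOf a - 1 < τ.idxOf y - τ.idxOf x - 1 →
      ¬ Critical τ' a b)
    (hterm : Terminal τ) :
    ∀ z : P, Precedes τ x z → Precedes τ z y →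
      (z < x ∧ z < y) ∨ (x < z ∧ y < z) :=
  stmt_12_general τ hτ x y hxy hfence hind hterm
end
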